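/- Coercivity of the ordering ≺ (property (as09)): For every real number C, the set of multi-indices γ with |γ|_≺ ≤ C is finite. In particular, for every multi-index β, the set {γ : γ ≺ β} is finite. -/

import Mathlib

/-!
`|γ|_≺ - α = Σ_j w_j γ(j)` is linear in `γ`, with weights `w_0 = λ`, `w_k = α k` for `k ≥ 1` and
`w_n = |n| - α ≥ 1 - α`. These weights are positive and only finitely many lie below any bound, so
on a sublevel set both the support of `γ` and each entry `γ(j) ≤ C / w_j` are bounded.
-/

open MvPowerSeries

noncomputable section

/-- Indices `n ∈ ℕ² \ {(0,0)}` for the variables `z_n`. -/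
abbrev Pos2 : Type := {p : ℕ × ℕ // p ≠ (0, 0)}

/-- The variables: `z_k` for `k ∈ ℕ` (left) and `z_n` for `n ∈ ℕ²\{0}` (right). -/
abbrev Var : Type := ℕ ⊕ Pos2

/-- Multi-indices: finitely supported functions from the variables to ℕ. -/
abbrev MIdx : Type := Var →₀ ℕ

/-- The algebra ℝ[[z_k, z_n]] of formal power series. -/
abbrev FPS : Type := MvPowerSeries Var ℝ

/-- The variable `z_k` as a power series. -/
def zk (k : ℕ) : FPS := MvPowerSeries.X (Sum.inl k)

/-- The variable `z_n` as a power series. -/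
def zn (n : Pos2) : FPS := MvPowerSeries.X (Sum.inr n)

/-- The derivation `D⁽⁰⁾ = Σ_k (k+1) z_{k+1} ∂_{z_k}`, defined componentwise by
`(D⁽⁰⁾π)_β = Σ_{k, β(k+1) ≥ 1} (k+1)(β(k)+1) π_{β + e_k - e_{k+1}}`. -/
def Dzero (π : FPS) : FPS := fun β =>
  ∑ j ∈ β.support,
    (match j with
     | Sum.inl (k + 1) =>
         ((k : ℝ) + 1) * ((β (Sum.inl k) : ℝ) + 1) *
           MvPowerSeries.coeff
             (β + Finsupp.single (Sum.inl k) 1 - Finsupp.single (Sum.inl (k + 1)) 1) π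
     | _ => 0)

/-- `c ∈ ℝ[[z_k]]`: the subalgebra of series with no `z_n`-dependence. -/
def OnlyZk (c : FPS) : Prop :=
  ∀ β : MIdx, (∃ n : Pos2, β (Sum.inr n) ≠ 0) → MvPowerSeries.coeff β c = 0

/-- `[β] := Σ_k k β(k) − Σ_n β(n)`. -/
def bracketZ (β : MIdx) : ℤ :=
  β.sum fun j m => (match j with | Sum.inl k => (k : ℤ) | Sum.inr _ => -1) * (m : ℤ)

/-- `|β|_p := Σ_n |n| β(n)` where `|n| = n₁ + 2 n₂`. -/
def homP (β : MIdx) : ℝ :=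
  β.sum fun j m =>
    (match j with | Sum.inl _ => (0 : ℝ) | Sum.inr n => (n.val.1 : ℝ) + 2 * n.val.2) * (m : ℝ)

/-- The homogeneity `|β| := α (1 + [β]) + |β|_p`. -/
def hom (α : ℝ) (β : MIdx) : ℝ := α * (1 + (bracketZ β : ℝ)) + homP β

/-- `|β|_≺ := |β| + λ β(0)`; the ordering is `γ ≺ β iff |γ|_≺ < |β|_≺`. -/
def ordP (α lam : ℝ) (β : MIdx) : ℝ := hom α β + lam * (β (Sum.inl 0) : ℝ)


open Filter

theorem Finsupp.finite_setOf_sum_mul_le {ι : Type*} {w : ι → ℝ} (hpos : ∀ j, 0 < w j)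
    (hw : Tendsto w cofinite atTop) (C : ℝ) :
    {γ : ι →₀ ℕ | (γ.sum fun j m => w j * m) ≤ C}.Finite := by
  classical
  have hS : {j | w j ≤ C}.Finite := by
    simpa only [not_lt] using eventually_cofinite.1 (hw.eventually_gt_atTop C)
  refine (Set.finite_Iic (Finsupp.indicator hS.toFinset fun j _ => ⌊C / w j⌋₊)).subset ?_
  intro γ (hγ : (γ.sum fun j m => w j * m) ≤ C) j
  obtain hj | hj := eq_or_ne (γ j) 0
  · simp [hj]
  have hterm : w j * γ j ≤ C :=
    (Finset.single_le_sum (f := fun j => w j * (γ j : ℝ)) (fun i _ => (mul_nonneg (hpos i).le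
      (Nat.cast_nonneg _))) (Finsupp.mem_support_iff.2 hj)).trans hγ
  have hjS : w j ≤ C :=
    (le_mul_of_one_le_right (hpos j).le (by exact_mod_cast Nat.one_le_iff_ne_zero.2 hj)).trans
      hterm
  rw [Finsupp.indicator_of_mem (hS.mem_toFinset.2 hjS)]
  exact Nat.le_floor ((le_div_iff₀' (hpos j)).2 hterm)

def weight (α lam : ℝ) : Var → ℝ
  | Sum.inl 0 => lam
  | Sum.inl (k + 1) => α * (k + 1)
  | Sum.inr n => n.val.1 + 2 * n.val.2 - α

lemma ordP_eq_add_sum_weight (α lam : ℝ) (γ : MIdx) :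
    ordP α lam γ = α + γ.sum fun j m => weight α lam j * m := by
  classical
  have hzero :
      lam * (γ (Sum.inl 0) : ℝ) = γ.sum fun j m => if j = Sum.inl 0 then lam * m else 0 := by
    rw [Finsupp.sum, Finset.sum_ite_eq']
    split_ifs with h
    · rfl
    · simp [Finsupp.notMem_support_iff.1 h]
  rw [ordP, hom, bracketZ, homP, hzero, Finsupp.sum, Finsupp.sum, Finsupp.sum, Finsupp.sum,
    Int.cast_sum, mul_add, mul_one, Finset.mul_sum, add_assoc, add_assoc,
    ← Finset.sum_add_distrib, ← Finset.sum_add_distrib]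
  congr 1
  refine Finset.sum_congr rfl fun j _ => ?_
  match j with
  | Sum.inl 0 => simp [weight]
  | Sum.inl (k + 1) => simp [weight]; ring
  | Sum.inr n => simp [weight]; ring

lemma Pos2.one_le_fst_add_two_mul_snd (n : Pos2) : (1 : ℝ) ≤ n.val.1 + 2 * n.val.2 := by
  obtain ⟨⟨a, b⟩, hab⟩ := n
  have : 1 ≤ a + 2 * b := by grind
  exact_mod_cast this

lemma weight_pos {α lam : ℝ} (hα0 : 0 < α) (hα1 : α < 1) (hlam0 : 0 < lam) (j : Var) :
    0 < weight α lam j := by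
  match j with
  | Sum.inl 0 => exact hlam0
  | Sum.inl (k + 1) => simp only [weight]; positivity
  | Sum.inr n => simp only [weight]; linarith [Pos2.one_le_fst_add_two_mul_snd n]

lemma tendsto_weight {α : ℝ} (hα0 : 0 < α) (lam : ℝ) : Tendsto (weight α lam) cofinite atTop := by
  refine tendsto_atTop.2 fun C => eventually_cofinite.2 (Set.finite_preimage_inl_and_inr.1 ⟨?_, ?_⟩)
  · refine (Set.finite_Iic ⌈C / α⌉₊).subset fun k (hk : ¬ C ≤ weight α lam (Sum.inl k)) => ?_
    match k with
    | 0 => exact Nat.zero_le _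
    | k + 1 =>
      have : ((k + 1 : ℕ) : ℝ) ≤ C / α := by
        rw [le_div_iff₀ hα0]; push_cast; simp only [weight] at hk; linarith
      exact_mod_cast this.trans (Nat.le_ceil _)
  · refine ((Set.finite_Iic (⌈C + α⌉₊, ⌈C + α⌉₊)).preimage Subtype.val_injective.injOn).subset
      fun n (hn : ¬ C ≤ weight α lam (Sum.inr n)) => ?_
    simp only [weight, not_le] at hn
    have h1 : (n.val.1 : ℝ) ≤ C + α := by linarith [(n.val.2.cast_nonneg : (0 : ℝ) ≤ _)]
    have h2 : (n.val.2 : ℝ) ≤ C + α := by linarith [(n.val.1.cast_nonneg : (0 : ℝ) ≤ _)]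
    exact ⟨by exact_mod_cast h1.trans (Nat.le_ceil _), by exact_mod_cast h2.trans (Nat.le_ceil _)⟩

theorem stmt_12_general (α lam : ℝ) (hα0 : 0 < α) (hα1 : α < 1) (hlam0 : 0 < lam) :
    (∀ C : ℝ, {γ : MIdx | ordP α lam γ ≤ C}.Finite) ∧
    ∀ β : MIdx, {γ : MIdx | ordP α lam γ < ordP α lam β}.Finite := by
  have hle (C : ℝ) : {γ : MIdx | ordP α lam γ ≤ C}.Finite := by
    simpa only [ordP_eq_add_sum_weight, le_sub_iff_add_le'] using
      Finsupp.finite_setOf_sum_mul_le (weight_pos hα0 hα1 hlam0) (tendsto_weight hα0 lam) (C - α)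
  exact ⟨hle, fun β => (hle (ordP α lam β)).subset fun _ => le_of_lt (α := ℝ)⟩

/-- Coercivity of the ordering `≺` (property (as09)): for every `C ∈ ℝ` the set of
multi-indices `γ` with `|γ|_≺ ≤ C` is finite; in particular `{γ : γ ≺ β}` is finite. -/
theorem stmt_12 (α lam : ℝ) (hα0 : 0 < α) (hα1 : α < 1) (hlam0 : 0 < lam) (hlam : lam < α) :
    (∀ C : ℝ, {γ : MIdx | ordP α lam γ ≤ C}.Finite) ∧
    ∀ β : MIdx, {γ : MIdx | ordP α lam γ < ordP α lam β}.Finite :=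
  stmt_12_general α lam hα0 hα1 hlam0
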